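/- arXiv:1903.06823 — 6 statements merged into one kernel-verified Lean document; each statement's English description precedes it below -/
import Mathlib

section
/- Let p be an odd prime. For ε1, ε2 ∈ {−1,1} with ε1 ≠ ε2, the number of pairs (b,c) mod p with Legendre symbol ((b^2+4c)/p) = ε1 and ((−c)/p) = ε2 is exactly (p−1)^2/4. -/
/-!
For `ε = ±1` one has `2 · [χ v = ε] = [v ≠ 0] + ε χ(v)`, so counting values of the quadratic
character `χ` reduces to character sums. Count the pairs fibrewise over `c`: `χ(-c) = ε₂` holds
for `(p-1)/2` values of `c`, and for each of them `χ(b² + 4c) = ε₁ = -χ(-4c)` holds for `(p-1)/2`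
values of `b`. The latter because `∑_b χ(b² + a) = -1` for `a ≠ 0` (a Jacobi sum once `b²` is
replaced by `t`, weighted by the `1 + χ(t)` square roots of `t`), while `b² + 4c` vanishes for
exactly `1 + χ(-4c) = 1 - ε₁` values of `b`.
-/

open Finset

theorem card_filter_prod_eq_card_mul {α β : Type*} [Fintype α] [Fintype β]
    (P : α → β → Prop) (Q : β → Prop) [∀ a b, Decidable (P a b)] [DecidablePred Q]
    {m : ℕ} (hP : ∀ b, Q b → #{a | P a b} = m) :
    #{ab : α × β | P ab.1 ab.2 ∧ Q ab.2} = #{b | Q b} * m := by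
  simp_rw [card_filter, Fintype.sum_prod_type_right, and_comm (a := P _ _), ite_and,
    sum_ite_irrel, sum_const_zero, ← card_filter]
  rw [← sum_filter, sum_congr rfl fun b hb => hP b (mem_filter.mp hb).2, sum_const, smul_eq_mul]

section QuadraticCharCount

variable {F : Type*} [Field F] [Fintype F] [DecidableEq F]

local notation "χ" => quadraticChar F

theorem sum_comp_sq_eq_sum_quadraticChar_add_one_mul (hF : ringChar F ≠ 2) (g : F → ℤ) :
    ∑ x : F, g (x ^ 2) = ∑ t : F, (χ t + 1) * g t := by
  rw [← sum_fiberwise univ (fun x : F => x ^ 2)]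
  refine sum_congr rfl fun t _ => ?_
  rw [sum_congr rfl fun x hx => by rw [(mem_filter.mp hx).2], sum_const, nsmul_eq_mul,
    ← quadraticChar_card_sqrts hF t]
  simp

theorem sum_quadraticChar_add_eq_zero (hF : ringChar F ≠ 2) (a : F) : ∑ t : F, χ (t + a) = 0 :=
  (Equiv.sum_comp (Equiv.addRight a) χ).trans (quadraticChar_sum_zero hF)

theorem sum_quadraticChar_mul_add_eq_neg_one (hF : ringChar F ≠ 2) {a : F} (ha : a ≠ 0) :
    ∑ t : F, χ t * χ (t + a) = -1 := by
  have hχ1 : χ (-1) ^ 2 = 1 := quadraticChar_sq_one (neg_ne_zero.mpr one_ne_zero)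
  have hJ : ∑ s : F, χ s * χ (1 - s) = -χ (-1) := by
    simpa only [jacobiSum, (quadraticChar_isQuadratic F).inv] using
      jacobiSum_nontrivial_inv (quadraticChar_ne_one hF)
  have hnorm : χ (-a) * χ a = χ (-1) := by
    rw [← map_mul, show -a * a = -1 * a ^ 2 by ring, map_mul, quadraticChar_sq_one' ha, mul_one]
  -- substituting `t = -a s` turns the sum into `χ(-1)` times the Jacobi sum `J(χ, χ) = -χ(-1)`
  calc ∑ t : F, χ t * χ (t + a)
      = ∑ s : F, χ (-a * s) * χ (-a * s + a) :=
        (Equiv.sum_comp (Equiv.mulLeft₀ (-a) (neg_ne_zero.mpr ha)) fun t => χ t * χ (t + a)).symm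
    _ = ∑ s : F, χ (-1) * (χ s * χ (1 - s)) := by
        refine sum_congr rfl fun s _ => ?_
        rw [show -a * s + a = a * (1 - s) by ring, map_mul, map_mul, ← hnorm]
        ring
    _ = -1 := by rw [← mul_sum, hJ, mul_neg, ← sq, hχ1]

theorem sum_quadraticChar_sq_add_eq_neg_one (hF : ringChar F ≠ 2) {a : F} (ha : a ≠ 0) :
    ∑ x : F, χ (x ^ 2 + a) = -1 := by
  rw [sum_comp_sq_eq_sum_quadraticChar_add_one_mul hF fun t => χ (t + a)]
  simp only [add_mul, one_mul, sum_add_distrib, sum_quadraticChar_mul_add_eq_neg_one hF ha,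
    sum_quadraticChar_add_eq_zero hF, add_zero]

theorem two_mul_card_quadraticChar_eq {α : Type*} [Fintype α] (f : α → F) {ε : ℤ}
    (hε : ε = -1 ∨ ε = 1) :
    2 * (#{x | χ (f x) = ε} : ℤ) = #{x | f x ≠ 0} + ε * ∑ x, χ (f x) := by
  simp only [card_filter, Nat.cast_sum, mul_sum, ← sum_add_distrib]
  refine sum_congr rfl fun x _ => ?_
  by_cases hx : f x = 0
  · rcases hε with rfl | rfl <;> simp [hx]
  · rcases quadraticChar_dichotomy hx with h | h <;> rcases hε with rfl | rfl <;> simp [h, hx]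

theorem card_quadraticChar_neg_eq (hF : ringChar F ≠ 2) {ε : ℤ} (hε : ε = -1 ∨ ε = 1) :
    #{c : F | χ (-c) = ε} = (Fintype.card F - 1) / 2 := by
  have h := two_mul_card_quadraticChar_eq (fun c : F => -c) hε
  rw [Fintype.sum_equiv (Equiv.neg F) (fun c => χ (-c)) χ fun _ => rfl,
    quadraticChar_sum_zero hF, mul_zero, add_zero] at h
  have hnz : #{c : F | -c ≠ 0} = Fintype.card F - 1 := by
    simp [filter_ne', card_erase_of_mem]
  omega

theorem card_quadraticChar_sq_add_eq (hF : ringChar F ≠ 2) {ε : ℤ} (hε : ε = -1 ∨ ε = 1)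
    {a : F} (ha : χ (-a) = -ε) :
    #{x : F | χ (x ^ 2 + a) = ε} = (Fintype.card F - 1) / 2 := by
  have ha0 : a ≠ 0 := by
    rintro rfl
    rcases hε with rfl | rfl <;> simp at ha
  have h := two_mul_card_quadraticChar_eq (fun x : F => x ^ 2 + a) hε
  rw [sum_quadraticChar_sq_add_eq_neg_one hF ha0] at h
  have hroots := quadraticChar_card_sqrts hF (-a)
  have hsplit := card_filter_add_card_filter_not (s := univ) (p := fun x : F => x ^ 2 = -a)
  simp only [Set.toFinset_ofPred, card_univ, ← add_eq_zero_iff_eq_neg, ha, ne_eq] at hroots hsplit h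
  rcases hε with rfl | rfl <;> omega

end QuadraticCharCount

theorem stmt_2 (p : ℕ) [Fact p.Prime] (hodd : Odd p) (ε₁ ε₂ : ℤ)
    (h₁ : ε₁ = -1 ∨ ε₁ = 1) (h₂ : ε₂ = -1 ∨ ε₂ = 1) (hne : ε₁ ≠ ε₂) :
    ((Finset.univ : Finset (ZMod p × ZMod p)).filter
      (fun bc => quadraticChar (ZMod p) (bc.1 ^ 2 + 4 * bc.2) = ε₁ ∧
        quadraticChar (ZMod p) (-bc.2) = ε₂)).card = (p - 1) ^ 2 / 4 := by
  have hF : ringChar (ZMod p) ≠ 2 := by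
    rw [ZMod.ringChar_zmod_n]
    rintro rfl
    exact Nat.not_odd_iff_even.mpr even_two hodd
  have hε : ε₂ = -ε₁ := by omega
  have h4 : quadraticChar (ZMod p) 4 = 1 := by
    rw [show (4 : ZMod p) = 2 ^ 2 by norm_num]
    exact quadraticChar_sq_one' (Ring.two_ne_zero hF)
  have hfiber (c : ZMod p) (hc : quadraticChar (ZMod p) (-c) = ε₂) :
      #{b | quadraticChar (ZMod p) (b ^ 2 + 4 * c) = ε₁} = (p - 1) / 2 := by
    have h4c : quadraticChar (ZMod p) (-(4 * c)) = -ε₁ := by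
      rw [← mul_neg, map_mul, h4, one_mul, hc, hε]
    simpa only [ZMod.card] using card_quadraticChar_sq_add_eq hF h₁ h4c
  refine (card_filter_prod_eq_card_mul _ _ hfiber).trans ?_
  have h2 : 2 ∣ p - 1 := (Nat.Odd.sub_odd hodd odd_one).two_dvd
  rw [card_quadraticChar_neg_eq hF h₂, ZMod.card, sq, Nat.div_mul_div_comm h2 h2]
end

section
/- Let p be an odd prime. For ε ∈ {−1,1}, the number of pairs (b,c) mod p with ((b^2+4c)/p) = ε and ((−c)/p) = ε is at most (p−1)^2/4 − ε(p−1)/2. -/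
/-!
For `ε = ±1` the indicator of `χ x = ε` is `(ε χ x + χ x ^ 2) / 2`, so counts of this kind reduce
to character sums. Grouping the pairs by `c`: there are `(p - 1) / 2` values with `χ (-c) = ε`,
and for each of them `∑ b, χ (b ^ 2 + 4 c) = -1` (a Jacobi sum `J(χ, χ)` after substituting
`t = b ^ 2`), while `b ^ 2 + 4 c` vanishes for exactly `1 + χ (-c) = 1 + ε` values of `b`. Hence
each such `c` contributes `(p - 1) / 2 - ε` values of `b`, and the bound holds with equality.
-/

open Finset

lemma card_filter_prod_eq_sum_card_filter {α β : Type*} [Fintype α] [Fintype β]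
    (P : α → β → Prop) (Q : β → Prop) [∀ a b, Decidable (P a b)] [DecidablePred Q] :
    #{x : α × β | P x.1 x.2 ∧ Q x.2} = ∑ b ∈ {b | Q b}, #{a | P a b} := by
  rw [card_filter, Fintype.sum_prod_type_right, sum_filter]
  refine sum_congr rfl fun b _ => ?_
  by_cases hb : Q b
  · simp only [hb, and_true, if_true, card_filter]
  · simp [hb]

section

variable {F : Type*} [Field F] [Fintype F] [DecidableEq F]

local notation "χ" => quadraticChar F

lemma quadraticChar_sum_mul_add (hF : ringChar F ≠ 2) {a : F} (ha : a ≠ 0) :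
    ∑ x, χ x * χ (x + a) = -1 := by
  have hJ := jacobiSum_nontrivial_inv (quadraticChar_ne_one hF)
  rw [(quadraticChar_isQuadratic F).inv, jacobiSum] at hJ
  have hscale (y : F) : χ (-a * y) * χ (-a * y + a) = χ (-1) * (χ y * χ (1 - y)) := by
    rw [show -a * y + a = a * (1 - y) by ring, show -a * y = -1 * a * y by ring, map_mul,
      map_mul, map_mul]
    linear_combination (χ (-1) * χ y * χ (1 - y)) * quadraticChar_sq_one ha
  calc ∑ x, χ x * χ (x + a) = ∑ y, χ (-a * y) * χ (-a * y + a) :=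
        (Equiv.sum_comp (Equiv.mulLeft₀ (-a) (neg_ne_zero.mpr ha)) _).symm
    _ = -1 := by
      rw [Fintype.sum_congr _ _ hscale, ← mul_sum, hJ]
      linear_combination -quadraticChar_sq_one (neg_ne_zero.mpr (one_ne_zero (α := F)))

lemma quadraticChar_sum_sq_add (hF : ringChar F ≠ 2) {a : F} (ha : a ≠ 0) :
    ∑ b, χ (b ^ 2 + a) = -1 := by
  have hfib : ∑ b, χ (b ^ 2 + a) = ∑ t, (χ t + 1) * χ (t + a) := by
    rw [← sum_fiberwise univ (fun b => b ^ 2)]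
    refine sum_congr rfl fun t _ => ?_
    rw [← quadraticChar_card_sqrts hF t, Set.toFinset_ofPred, ← nsmul_eq_mul, ← sum_const]
    exact sum_congr rfl fun b hb => by rw [(mem_filter.mp hb).2]
  have hshift : ∑ t, χ (t + a) = 0 :=
    (Equiv.sum_comp (Equiv.addRight a) χ).trans (quadraticChar_sum_zero hF)
  simp only [hfib, add_mul, one_mul, sum_add_distrib, hshift, quadraticChar_sum_mul_add hF ha,
    add_zero]

lemma two_mul_card_filter_quadraticChar_eq {ι : Type*} (s : Finset ι) (f : ι → F) {ε : ℤ}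
    (hε : ε = -1 ∨ ε = 1) :
    2 * (#{i ∈ s | χ (f i) = ε} : ℤ) = ε * ∑ i ∈ s, χ (f i) + #{i ∈ s | f i ≠ 0} := by
  simp only [card_filter, Nat.cast_sum, mul_sum, ← sum_add_distrib]
  refine sum_congr rfl fun i _ => ?_
  rcases eq_or_ne (f i) 0 with h | h
  · rcases hε with rfl | rfl <;> simp [h]
  · rcases quadraticChar_dichotomy h with h' | h' <;> rcases hε with rfl | rfl <;> simp [h, h']

lemma two_mul_card_quadraticChar_neg_eq (hF : ringChar F ≠ 2) {ε : ℤ} (hε : ε = -1 ∨ ε = 1) :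
    2 * (#{c | χ (-c) = ε} : ℤ) = Fintype.card F - 1 := by
  have hsum : ∑ c, χ (-c) = 0 :=
    (Equiv.sum_comp (Equiv.neg F) χ).trans (quadraticChar_sum_zero hF)
  rw [two_mul_card_filter_quadraticChar_eq _ _ hε, hsum]
  simp only [neg_ne_zero, filter_ne', card_erase_of_mem (mem_univ _), card_univ]
  rw [Nat.cast_sub Fintype.card_pos]
  ring

lemma two_mul_card_quadraticChar_sq_add_eq (hF : ringChar F ≠ 2) {ε : ℤ} (hε : ε = -1 ∨ ε = 1)
    {a : F} (ha : a ≠ 0) (haε : χ (-a) = ε) :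
    2 * (#{b | χ (b ^ 2 + a) = ε} : ℤ) = Fintype.card F - 1 - 2 * ε := by
  have hroots : (#{b : F | b ^ 2 = -a} + #{b : F | b ^ 2 + a ≠ 0} : ℤ) = Fintype.card F := by
    simp only [ne_eq, add_eq_zero_iff_eq_neg]
    exact_mod_cast card_filter_add_card_filter_not _
  have hsq := quadraticChar_card_sqrts hF (-a)
  rw [Set.toFinset_ofPred] at hsq
  rw [two_mul_card_filter_quadraticChar_eq _ _ hε, quadraticChar_sum_sq_add hF ha]
  linear_combination hroots - hsq - haε

lemma four_mul_card_quadraticChar_pairs (hF : ringChar F ≠ 2) {ε : ℤ} (hε : ε = -1 ∨ ε = 1) :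
    4 * (#{bc : F × F | χ (bc.1 ^ 2 + 4 * bc.2) = ε ∧ χ (-bc.2) = ε} : ℤ)
      = (Fintype.card F - 1) * (Fintype.card F - 1 - 2 * ε) := by
  have h2 : (2 : F) ≠ 0 := Ring.two_ne_zero hF
  have h4 : (4 : F) ≠ 0 := by
    rw [show (4 : F) = 2 ^ 2 by norm_num]
    exact pow_ne_zero 2 h2
  have hfiber : ∀ c ∈ ({c | χ (-c) = ε} : Finset F),
      2 * (#{b | χ (b ^ 2 + 4 * c) = ε} : ℤ) = Fintype.card F - 1 - 2 * ε := by
    intro c hc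
    replace hc := (mem_filter.mp hc).2
    have hc0 : c ≠ 0 := by
      rintro rfl
      rcases hε with rfl | rfl <;> simp at hc
    refine two_mul_card_quadraticChar_sq_add_eq hF hε (mul_ne_zero h4 hc0) ?_
    rw [show -(4 * c) = 2 ^ 2 * -c by ring, map_mul, quadraticChar_sq_one' h2, one_mul, hc]
  rw [card_filter_prod_eq_sum_card_filter (fun b c => χ (b ^ 2 + 4 * c) = ε)
      (fun c => χ (-c) = ε), Nat.cast_sum, show (4 : ℤ) = 2 * 2 by norm_num, mul_assoc,
    mul_sum, sum_congr rfl hfiber, sum_const, nsmul_eq_mul, ← mul_assoc,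
    two_mul_card_quadraticChar_neg_eq hF hε]

end

theorem stmt_3 (p : ℕ) [Fact p.Prime] (hodd : Odd p) (ε : ℤ) (hε : ε = -1 ∨ ε = 1) :
    (((Finset.univ : Finset (ZMod p × ZMod p)).filter
      (fun bc => quadraticChar (ZMod p) (bc.1 ^ 2 + 4 * bc.2) = ε ∧
        quadraticChar (ZMod p) (-bc.2) = ε)).card : ℤ)
      ≤ ((p : ℤ) - 1) ^ 2 / 4 - ε * ((p : ℤ) - 1) / 2 := by
  have hF : ringChar (ZMod p) ≠ 2 := by
    rw [ZMod.ringChar_zmod_n]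
    rintro rfl
    exact absurd hodd (by decide)
  have hcount := four_mul_card_quadraticChar_pairs hF hε
  obtain ⟨k, rfl⟩ := hodd
  have hp : ((2 * k + 1 : ℕ) : ℤ) - 1 = 2 * k := by push_cast; ring
  rw [ZMod.card, hp] at hcount
  rw [hp, show (2 * (k : ℤ)) ^ 2 = 4 * k ^ 2 by ring, show ε * (2 * k) = 2 * (ε * k) by ring,
    Int.mul_ediv_cancel_left _ (by norm_num), Int.mul_ediv_cancel_left _ (by norm_num)]
  linarith
end

section
/- Let n be an odd squarefree positive integer and ε1, ε2 ∈ {−1,1} with ε1 ≠ ε2. Then the number of pairs (b,c) mod n with Jacobi symbol ((b^2+4c)/n) = ε1 and ((−c)/n) = ε2 is at most φ(n)^2/4. -/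
/-!
Write `χ` for the Jacobi symbol modulo `n` on `ZMod n` and `S(i, j)` for
`∑ b c, χ(b² + 4c)^i χ(-c)^j`. As `χ` takes values in `{0, ±1}`,
`2·[χ x = ε] = χ(x)² + ε χ(x)`, so four times the count is
`S(2,2) + ε₁ S(1,2) + ε₂ S(2,1) + ε₁ε₂ S(1,1)`. The involution `c ↦ -(b² + 4c)/4` exchanges
`-c` and `b² + 4c` up to the square `4`, so `S(1,2) = S(2,1)`, and with `ε₂ = -ε₁` the count
is `(S(2,2) - S(1,1))/4`. Both sums are multiplicative in `n` by the Chinese remainder theorem.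
For an odd prime `p`, `S(2,2) = (p-1)²` by counting square roots, and `S(1,1) = 0` because
`∑_c χ(c(c + a)) = -1` for `a ≠ 0` (a Jacobi sum `J(χ, χ)`). Hence the count is `φ(n)²/4`
for `n > 1`, and `0` for `n = 1`.
-/

open Finset

namespace JacobiPairs

section FiniteField

variable {F : Type*} [Field F] [Fintype F] [DecidableEq F]

lemma quadraticChar_sq_eq_ite (x : F) :
    quadraticChar F x ^ 2 = if x = 0 then 0 else 1 := by
  split_ifs with hx
  · simp [hx]
  · exact quadraticChar_sq_one hx

lemma sum_quadraticChar_sq : ∑ x : F, quadraticChar F x ^ 2 = Fintype.card F - 1 := by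
  simp_rw [← MulChar.pow_apply' _ two_ne_zero, (quadraticChar_isQuadratic F).sq_eq_one,
    MulChar.sum_one_eq_card_units, Fintype.card_units]
  push_cast [Fintype.card_pos]
  ring

variable (hF : ringChar F ≠ 2)
include hF

lemma sum_quadraticChar_sq_sq_add (a : F) :
    ∑ b : F, quadraticChar F (b ^ 2 + a) ^ 2 = Fintype.card F - 1 - quadraticChar F (-a) := by
  have hsqrts := quadraticChar_card_sqrts hF (-a)
  rw [Set.toFinset_ofPred] at hsqrts
  simp only [quadraticChar_sq_eq_ite, add_eq_zero_iff_eq_neg]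
  rw [sum_ite, sum_const_zero, zero_add, sum_const, nsmul_one, filter_not,
    card_sdiff_of_subset (filter_subset _ _), card_univ]
  push_cast [card_le_univ]
  linear_combination -hsqrts

lemma sum_quadraticChar_mul_add {a : F} (ha : a ≠ 0) :
    ∑ c : F, quadraticChar F (c * (c + a)) = -1 := by
  have hJ := jacobiSum_nontrivial_inv (quadraticChar_ne_one hF)
  rw [(quadraticChar_isQuadratic F).inv, jacobiSum] at hJ
  rw [← Equiv.sum_comp (Equiv.mulLeft₀ (-a) (neg_ne_zero.2 ha))]
  have key : ∀ x : F, quadraticChar F (-a * x * (-a * x + a))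
      = quadraticChar F (-1) * (quadraticChar F x * quadraticChar F (1 - x)) := by
    intro x
    rw [show -a * x * (-a * x + a) = a ^ 2 * (-1 * (x * (1 - x))) by ring, map_mul,
      quadraticChar_sq_one' ha, one_mul, map_mul, map_mul]
  simp only [Equiv.mulLeft₀_apply, key, ← mul_sum, hJ]
  rw [mul_neg, ← sq, quadraticChar_sq_one (neg_ne_zero.2 one_ne_zero)]

lemma sum_quadraticChar_mul_add_eq_ite (a : F) :
    ∑ c : F, quadraticChar F (c * (c + a))
      = if a = 0 then (Fintype.card F - 1 : ℤ) else -1 := by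
  split_ifs with ha
  · simp only [ha, add_zero, ← sq, map_pow, sum_quadraticChar_sq]
  · exact sum_quadraticChar_mul_add hF ha

lemma quadraticChar_four_mul (x : F) : quadraticChar F (4 * x) = quadraticChar F x := by
  rw [map_mul, show (4 : F) = 2 ^ 2 by norm_num, quadraticChar_sq_one' (Ring.two_ne_zero hF),
    one_mul]

lemma sum_sum_quadraticChar_sq_mul_sq :
    ∑ b : F, ∑ c : F, quadraticChar F (b ^ 2 + 4 * c) ^ 2 * quadraticChar F (-c) ^ 2
      = (Fintype.card F - 1) ^ 2 := by
  rw [sum_comm]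
  have inner (c : F) : ∑ b : F, quadraticChar F (b ^ 2 + 4 * c) ^ 2 * quadraticChar F (-c) ^ 2
      = (Fintype.card F - 1) * quadraticChar F (-c) ^ 2 - (quadraticChar F ^ 3) (-c) := by
    rw [← sum_mul, sum_quadraticChar_sq_sq_add hF, ← mul_neg, quadraticChar_four_mul hF,
      MulChar.pow_apply' _ three_ne_zero]
    ring
  simp only [inner, sum_sub_distrib, ← mul_sum,
    (quadraticChar_isQuadratic F).pow_odd (by decide : Odd 3)]
  have hneg (f : F → ℤ) : ∑ c, f (-c) = ∑ c, f c :=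
    Fintype.sum_equiv (Equiv.neg F) _ _ fun _ => rfl
  rw [hneg (fun c => quadraticChar F c ^ 2), hneg (quadraticChar F), sum_quadraticChar_sq,
    quadraticChar_sum_zero hF]
  ring

lemma sum_sum_quadraticChar_mul :
    ∑ b : F, ∑ c : F, quadraticChar F (b ^ 2 + 4 * c) * quadraticChar F (-c) = 0 := by
  have h2 := Ring.two_ne_zero hF
  have inner (b : F) : ∑ c : F, quadraticChar F (b ^ 2 + 4 * c) * quadraticChar F (-c)
      = quadraticChar F (-1) * ∑ d : F, quadraticChar F (d * (d + b ^ 2)) := by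
    rw [mul_sum]
    refine (Fintype.sum_equiv (Equiv.mulLeft₀ (2⁻¹ ^ 2) (by simpa using h2)) _ _
      fun d => ?_).symm
    simp only [Equiv.mulLeft₀_apply, ← map_mul]
    rw [show (b ^ 2 + 4 * (2⁻¹ ^ 2 * d)) * -(2⁻¹ ^ 2 * d)
        = 2⁻¹ ^ 2 * (-1 * (d * (d + b ^ 2))) by field_simp; ring,
      map_mul _ (2⁻¹ ^ 2), quadraticChar_sq_one' (inv_ne_zero h2), one_mul]
  simp only [inner, ← mul_sum, sum_quadraticChar_mul_add_eq_ite hF,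
    pow_eq_zero_iff two_ne_zero]
  rw [sum_ite, filter_eq', filter_ne', sum_const, sum_const, card_erase_of_mem (mem_univ 0)]
  rw [if_pos (mem_univ 0), card_singleton, card_univ, one_nsmul, nsmul_eq_mul,
    Nat.cast_pred Fintype.card_pos]
  ring

end FiniteField

def jacobiZMod (n : ℕ) (x : ZMod n) : ℤ := jacobiSym x.val n

lemma jacobiZMod_trichotomy {n : ℕ} (x : ZMod n) :
    jacobiZMod n x = 0 ∨ jacobiZMod n x = 1 ∨ jacobiZMod n x = -1 :=
  jacobiSym.trichotomy _ _

section JacobiZMod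

variable {n : ℕ} [NeZero n]

lemma jacobiZMod_intCast (a : ℤ) : jacobiZMod n a = jacobiSym a n := by
  rw [jacobiZMod, ZMod.val_intCast, ← jacobiSym.mod_left]

lemma jacobiZMod_natCast (a : ℕ) : jacobiZMod n a = jacobiSym a n := by
  exact_mod_cast jacobiZMod_intCast (a : ℤ)

lemma jacobiZMod_mul (x y : ZMod n) :
    jacobiZMod n (x * y) = jacobiZMod n x * jacobiZMod n y := by
  rw [← ZMod.natCast_zmod_val x, ← ZMod.natCast_zmod_val y, ← Nat.cast_mul,
    jacobiZMod_natCast, jacobiZMod_natCast, jacobiZMod_natCast, Nat.cast_mul, jacobiSym.mul_left]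

lemma jacobiZMod_unit_sq_mul (u : (ZMod n)ˣ) (x : ZMod n) :
    jacobiZMod n ((u : ZMod n) ^ 2 * x) = jacobiZMod n x := by
  rw [jacobiZMod_mul, sq, jacobiZMod_mul, ← sq, jacobiZMod,
    jacobiSym.sq_one (by exact ZMod.val_coe_unit_coprime u), one_mul]

lemma jacobiZMod_eq_quadraticChar (p : ℕ) [Fact p.Prime] (x : ZMod p) :
    jacobiZMod p x = quadraticChar (ZMod p) x := by
  rw [jacobiZMod, ← jacobiSym.legendreSym.to_jacobiSym, legendreSym, Int.cast_natCast,
    ZMod.natCast_zmod_val]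

lemma jacobiZMod_mul_modulus {m k : ℕ} [NeZero m] [NeZero k] (hmk : m.Coprime k)
    (x : ZMod (m * k)) :
    jacobiZMod (m * k) x = jacobiZMod m (ZMod.chineseRemainder hmk x).1
      * jacobiZMod k (ZMod.chineseRemainder hmk x).2 := by
  rw [← ZMod.natCast_zmod_val x, map_natCast, Prod.fst_natCast, Prod.snd_natCast,
    jacobiZMod_natCast, jacobiZMod_natCast, jacobiZMod_natCast, jacobiSym.mul_right]

end JacobiZMod

def pairSum (n : ℕ) [NeZero n] (i j : ℕ) : ℤ :=
  ∑ b : ZMod n, ∑ c : ZMod n, jacobiZMod n (b ^ 2 + 4 * c) ^ i * jacobiZMod n (-c) ^ j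

lemma pairSum_comm {n : ℕ} [NeZero n] (hodd : Odd n) (i j : ℕ) :
    pairSum n i j = pairSum n j i := by
  set u := ZMod.unitOfCoprime 2 (Nat.coprime_two_left.mpr hodd)
  set w : ZMod n := ↑u⁻¹
  have hu : (u : ZMod n) = 2 := by simp [u]
  have hw : 2 * w = 1 := by rw [← hu]; exact u.mul_inv
  refine sum_congr rfl fun b _ => ?_
  let σ : ZMod n → ZMod n := fun c => -(w ^ 2 * (b ^ 2 + 4 * c))
  have hσ : Function.Involutive σ := fun c => by
    linear_combination (w ^ 2 * b ^ 2 * (2 * w + 1) + c * (2 * w + 1) * ((2 * w) ^ 2 + 1)) * hw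
  rw [← Equiv.sum_comp hσ.toPerm]
  refine sum_congr rfl fun c _ => ?_
  have h₁ : b ^ 2 + 4 * σ c = (u : ZMod n) ^ 2 * -c := by
    rw [hu]; linear_combination (-(2 * w + 1) * (b ^ 2 + 4 * c)) * hw
  have h₂ : -σ c = ((u⁻¹ : (ZMod n)ˣ) : ZMod n) ^ 2 * (b ^ 2 + 4 * c) := neg_neg _
  rw [Function.Involutive.coe_toPerm, h₁, h₂, jacobiZMod_unit_sq_mul, jacobiZMod_unit_sq_mul,
    mul_comm]

lemma pairSum_mul {m k : ℕ} [NeZero m] [NeZero k] (hmk : m.Coprime k) (i j : ℕ) :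
    pairSum (m * k) i j = pairSum m i j * pairSum k i j := by
  set e := ZMod.chineseRemainder hmk
  calc pairSum (m * k) i j
      = ∑ y : ZMod m × ZMod k, ∑ z : ZMod m × ZMod k,
          (jacobiZMod m (y.1 ^ 2 + 4 * z.1) ^ i * jacobiZMod m (-z.1) ^ j)
            * (jacobiZMod k (y.2 ^ 2 + 4 * z.2) ^ i * jacobiZMod k (-z.2) ^ j) := by
        refine Fintype.sum_equiv e.toEquiv _ _ fun b =>
          Fintype.sum_equiv e.toEquiv _ _ fun c => ?_
        simp only [jacobiZMod_mul_modulus hmk, map_add, map_mul, map_pow, map_neg, map_ofNat,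
          Prod.fst_add, Prod.pow_fst, Prod.fst_mul, Prod.fst_ofNat, Prod.snd_add,
          Prod.pow_snd, Prod.snd_mul, Prod.snd_ofNat, Prod.fst_neg, Prod.snd_neg,
          RingEquiv.toEquiv_eq_coe, EquivLike.coe_coe]
        ring
    _ = pairSum m i j * pairSum k i j := by
        simp only [pairSum, Fintype.sum_prod_type, sum_mul_sum]

section Prime

variable {p : ℕ} [Fact p.Prime] (hp : p ≠ 2)
include hp

lemma ringChar_zmod_ne_two : ringChar (ZMod p) ≠ 2 := by rwa [ZMod.ringChar_zmod_n]

lemma pairSum_two_two_prime : pairSum p 2 2 = ((p - 1 : ℕ) : ℤ) ^ 2 := by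
  simp only [pairSum, jacobiZMod_eq_quadraticChar]
  rw [sum_sum_quadraticChar_sq_mul_sq (ringChar_zmod_ne_two hp), ZMod.card,
    Nat.cast_sub (Fact.out : p.Prime).one_le, Nat.cast_one]

lemma pairSum_one_one_prime : pairSum p 1 1 = 0 := by
  simp only [pairSum, jacobiZMod_eq_quadraticChar, pow_one]
  exact sum_sum_quadraticChar_mul (ringChar_zmod_ne_two hp)

end Prime

lemma pairSum_one (i j : ℕ) : pairSum 1 i j = 1 := by
  simp [pairSum, jacobiZMod]

lemma exists_prime_mul_of_squarefree {n : ℕ} (hsf : Squarefree n) (hn : n ≠ 1) :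
    ∃ p m, p.Prime ∧ p.Coprime m ∧ n = p * m := by
  have hp := Nat.minFac_prime hn
  refine ⟨n.minFac, n / n.minFac, hp, ?_, (Nat.mul_div_cancel' n.minFac_dvd).symm⟩
  rw [← Nat.mul_div_cancel' n.minFac_dvd] at hsf
  exact (Nat.squarefree_mul_iff.mp hsf).1

lemma pairSum_two_two_eq_totient_sq {n : ℕ} [NeZero n] (hodd : Odd n) (hsf : Squarefree n) :
    pairSum n 2 2 = (n.totient : ℤ) ^ 2 := by
  induction n using Nat.strong_induction_on generalizing ‹NeZero n› with
  | _ n ih =>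
  rcases eq_or_ne n 1 with rfl | hn
  · simp [pairSum_one]
  obtain ⟨p, m, hp, hpm, rfl⟩ := exists_prime_mul_of_squarefree hsf hn
  have : Fact p.Prime := ⟨hp⟩
  have : NeZero m := ⟨right_ne_zero_of_mul (NeZero.ne (p * m))⟩
  obtain ⟨hpodd, hmodd⟩ := Nat.odd_mul.mp hodd
  rw [pairSum_mul hpm, pairSum_two_two_prime (hpodd.ne_two_of_dvd_nat dvd_rfl),
    ih m (lt_mul_left hmodd.pos hp.one_lt) hmodd hsf.of_mul_right, Nat.totient_mul hpm,
    Nat.totient_prime hp]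
  push_cast
  ring

lemma pairSum_one_one_eq_zero {n : ℕ} [NeZero n] (hodd : Odd n) (hsf : Squarefree n)
    (hn : n ≠ 1) : pairSum n 1 1 = 0 := by
  obtain ⟨p, m, hp, hpm, rfl⟩ := exists_prime_mul_of_squarefree hsf hn
  have : Fact p.Prime := ⟨hp⟩
  have : NeZero m := ⟨right_ne_zero_of_mul (NeZero.ne (p * m))⟩
  rw [pairSum_mul hpm, pairSum_one_one_prime (hodd.ne_two_of_dvd_nat (dvd_mul_right p m)),
    zero_mul]

lemma two_mul_ite_eq {a ε : ℤ} (ha : a = 0 ∨ a = 1 ∨ a = -1) (hε : ε = -1 ∨ ε = 1) :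
    2 * (if a = ε then 1 else 0) = a ^ 2 + ε * a := by
  rcases ha with rfl | rfl | rfl <;> rcases hε with rfl | rfl <;> norm_num

lemma four_mul_card_eq {n : ℕ} [NeZero n] {ε₁ ε₂ : ℤ} (h₁ : ε₁ = -1 ∨ ε₁ = 1)
    (h₂ : ε₂ = -1 ∨ ε₂ = 1) :
    4 * (#{bc : ZMod n × ZMod n |
      jacobiZMod n (bc.1 ^ 2 + 4 * bc.2) = ε₁ ∧ jacobiZMod n (-bc.2) = ε₂} : ℤ)
      = pairSum n 2 2 + ε₁ * pairSum n 1 2 + ε₂ * pairSum n 2 1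
        + ε₁ * ε₂ * pairSum n 1 1 := by
  rw [natCast_card_filter, Fintype.sum_prod_type, mul_sum]
  simp only [pairSum, mul_sum, ← sum_add_distrib]
  refine sum_congr rfl fun b _ => sum_congr rfl fun c _ => ?_
  rw [← mul_one (1 : ℤ), ← ite_zero_mul_ite_zero, show (4 : ℤ) = 2 * 2 by norm_num,
    mul_mul_mul_comm, two_mul_ite_eq (jacobiZMod_trichotomy _) h₁,
    two_mul_ite_eq (jacobiZMod_trichotomy _) h₂]
  ring

lemma card_filter_range_prod_range {n : ℕ} [NeZero n] (P : ZMod n × ZMod n → Prop)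
    [DecidablePred P] :
    #{bc ∈ range n ×ˢ range n | P ((bc.1 : ZMod n), (bc.2 : ZMod n))}
      = #{xy : ZMod n × ZMod n | P xy} := by
  refine card_nbij' (fun bc => ((bc.1 : ZMod n), (bc.2 : ZMod n)))
    (fun xy => (xy.1.val, xy.2.val)) ?_ ?_ ?_ ?_
  · intro bc _
    simp_all
  · intro xy hxy
    simp_all [ZMod.val_lt]
  · intro bc hbc
    simp only [coe_filter, mem_product, mem_range, Set.mem_ofPred_eq] at hbc
    simp [Nat.mod_eq_of_lt hbc.1.1, Nat.mod_eq_of_lt hbc.1.2]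
  · intro xy _
    simp

lemma card_filter_jacobiSym_eq (n : ℕ) [NeZero n] (ε₁ ε₂ : ℤ) :
    #{bc ∈ range n ×ˢ range n |
      jacobiSym ((bc.1 : ℤ) ^ 2 + 4 * bc.2) n = ε₁ ∧ jacobiSym (-(bc.2 : ℤ)) n = ε₂}
      = #{bc : ZMod n × ZMod n |
          jacobiZMod n (bc.1 ^ 2 + 4 * bc.2) = ε₁ ∧ jacobiZMod n (-bc.2) = ε₂} := by
  rw [← card_filter_range_prod_range]
  congr 1
  refine filter_congr fun bc _ => ?_
  simp only [← jacobiZMod_intCast]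
  push_cast
  rfl

lemma four_mul_card_eq_totient_sq_sub {n : ℕ} [NeZero n] (hodd : Odd n) (hsf : Squarefree n)
    {ε : ℤ} (hε : ε = -1 ∨ ε = 1) :
    4 * (#{bc : ZMod n × ZMod n |
      jacobiZMod n (bc.1 ^ 2 + 4 * bc.2) = ε ∧ jacobiZMod n (-bc.2) = -ε} : ℤ)
      = n.totient ^ 2 - pairSum n 1 1 := by
  have hsq : ε * ε = 1 := by rcases hε with rfl | rfl <;> norm_num
  rw [four_mul_card_eq hε (by rcases hε with rfl | rfl <;> norm_num), pairSum_comm hodd 2 1,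
    pairSum_two_two_eq_totient_sq hodd hsf]
  linear_combination -pairSum n 1 1 * hsq

lemma pairSum_one_one_nonneg {n : ℕ} [NeZero n] (hodd : Odd n) (hsf : Squarefree n) :
    0 ≤ pairSum n 1 1 := by
  rcases eq_or_ne n 1 with rfl | hn
  · simp [pairSum_one]
  · rw [pairSum_one_one_eq_zero hodd hsf hn]

end JacobiPairs

open JacobiPairs

theorem stmt_4 (n : ℕ) (hodd : Odd n) (hsf : Squarefree n) (ε₁ ε₂ : ℤ)
    (h₁ : ε₁ = -1 ∨ ε₁ = 1) (h₂ : ε₂ = -1 ∨ ε₂ = 1) (hne : ε₁ ≠ ε₂) :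
    ((Finset.range n ×ˢ Finset.range n).filter
      (fun bc => jacobiSym ((bc.1 : ℤ) ^ 2 + 4 * bc.2) n = ε₁ ∧
        jacobiSym (-(bc.2 : ℤ)) n = ε₂)).card ≤ n.totient ^ 2 / 4 := by
  have : NeZero n := ⟨hodd.pos.ne'⟩
  obtain rfl : ε₂ = -ε₁ := by omega
  rw [card_filter_jacobiSym_eq, Nat.le_div_iff_mul_le four_pos, mul_comm]
  zify
  linarith [four_mul_card_eq_totient_sq_sub hodd hsf h₁, pairSum_one_one_nonneg hodd hsf]
end

section
/- Let p be an odd prime and n a positive integer. The number of monic quadratic polynomials x^2 − bx − c over F_p with nonzero discriminant b^2+4c being a quadratic residue and satisfying x^{n+1} ≡ −c mod (p, x^2−bx−c) is at most (p−1)/2. -/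
open Polynomial

theorem stmt_8 (p : ℕ) [Fact p.Prime] (hodd : Odd p) (n : ℕ) (hn : 0 < n) :
    {bc : ZMod p × ZMod p |
        bc.1 ^ 2 + 4 * bc.2 ≠ 0 ∧ IsSquare (bc.1 ^ 2 + 4 * bc.2) ∧
        (X ^ 2 - C bc.1 * X - C bc.2 : (ZMod p)[X]) ∣ (X ^ (n + 1) + C bc.2)}.ncard
      ≤ (p - 1) / 2 := by
  classical
  have hp : p.Prime := Fact.out
  have hp2 : p ≠ 2 := by
    rintro rfl
    simp [Nat.odd_iff] at hodd
  have h2 : (2 : ZMod p) ≠ 0 := by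
    intro h
    have h' : ((2 : ℕ) : ZMod p) = 0 := by exact_mod_cast h
    rw [ZMod.natCast_eq_zero_iff] at h'
    exact hp2 ((Nat.prime_dvd_prime_iff_eq hp Nat.prime_two).mp h')
  have h4 : (4 : ZMod p) ≠ 0 := by
    intro h4
    have h4' : (4 : ZMod p) = 2 * 2 := by norm_num
    rw [h4'] at h4
    rcases mul_eq_zero.mp h4 with h | h <;> exact h2 h
  set T1 : Set (ZMod p) := {a | a ≠ 0 ∧ (a ^ n) ^ n = a ∧ a.val < (a ^ n).val} with hT1
  set T2 : Set (ZMod p) := {a | a ≠ 0 ∧ (a ^ n) ^ n = a ∧ (a ^ n).val < a.val} with hT2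
  set S : Set (ZMod p × ZMod p) := {bc : ZMod p × ZMod p |
        bc.1 ^ 2 + 4 * bc.2 ≠ 0 ∧ IsSquare (bc.1 ^ 2 + 4 * bc.2) ∧
        (X ^ 2 - C bc.1 * X - C bc.2 : (ZMod p)[X]) ∣ (X ^ (n + 1) + C bc.2)} with hS
  set Q : ZMod p × ZMod p → ZMod p → Prop := fun bc a =>
    a ≠ 0 ∧ (a ^ n) ^ n = a ∧ a.val < (a ^ n).val ∧ a ^ n + a = bc.1 ∧ a ^ n * a = -bc.2 with hQ
  set f : ZMod p × ZMod p → ZMod p := fun bc =>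
    if h : ∃ a, Q bc a then h.choose else 0 with hf
  have key : ∀ bc ∈ S, ∃ a, Q bc a := by
    rintro ⟨b, c⟩ ⟨hdisc, ⟨s, hs⟩, hdvd⟩
    simp only at hdisc hs hdvd ⊢
    have hs0 : s ≠ 0 := by rintro rfl; simp at hs; exact hdisc hs
    set a₁ : ZMod p := (b + s) * 2⁻¹ with ha₁
    set a₂ : ZMod p := (b - s) * 2⁻¹ with ha₂
    have h2inv : (2 : ZMod p) * 2⁻¹ = 1 := mul_inv_cancel₀ h2
    have e1 : (2 : ZMod p) * a₁ = b + s := by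
      rw [ha₁]
      calc (2 : ZMod p) * ((b + s) * 2⁻¹) = (b + s) * (2 * 2⁻¹) := by ring
      _ = b + s := by rw [h2inv, mul_one]
    have e2 : (2 : ZMod p) * a₂ = b - s := by
      rw [ha₂]
      calc (2 : ZMod p) * ((b - s) * 2⁻¹) = (b - s) * (2 * 2⁻¹) := by ring
      _ = b - s := by rw [h2inv, mul_one]
    clear ha₁ ha₂
    clear_value a₁ a₂
    have hsum : a₁ + a₂ = b := by
      apply mul_left_cancel₀ h2
      calc (2 : ZMod p) * (a₁ + a₂) = 2 * a₁ + 2 * a₂ := by ring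
      _ = (b + s) + (b - s) := by rw [e1, e2]
      _ = 2 * b := by ring
    have hprod : a₁ * a₂ = -c := by
      apply mul_left_cancel₀ h4
      calc (4 : ZMod p) * (a₁ * a₂) = (2 * a₁) * (2 * a₂) := by ring
      _ = (b + s) * (b - s) := by rw [e1, e2]
      _ = b ^ 2 - s * s := by ring
      _ = b ^ 2 - (b ^ 2 + 4 * c) := by rw [hs]
      _ = 4 * -c := by ring
    have hne : a₁ ≠ a₂ := by
      intro h
      apply hs0
      apply mul_left_cancel₀ h2
      calc (2 : ZMod p) * s = (b + s) - (b - s) := by ring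
      _ = 2 * a₁ - 2 * a₂ := by rw [e1, e2]
      _ = 2 * 0 := by rw [h]; ring
    have hb : b = a₁ + a₂ := hsum.symm
    have hc : c = -(a₁ * a₂) := by linear_combination hprod
    have hfact : (X ^ 2 - C b * X - C c : (ZMod p)[X]) = (X - C a₁) * (X - C a₂) := by
      rw [hb, hc, C_add, C_neg, C_mul]
      ring
    have hroot : ∀ a : ZMod p, (a = a₁ ∨ a = a₂) → a ^ (n + 1) = -c := by
      intro a ha
      have hdvd' : (X - C a) ∣ (X ^ (n + 1) + C c : (ZMod p)[X]) := by
        refine dvd_trans ?_ hdvd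
        rw [hfact]
        rcases ha with rfl | rfl
        · exact dvd_mul_right _ _
        · exact dvd_mul_left _ _
      have h' := (dvd_iff_isRoot).mp hdvd'
      simp only [IsRoot, eval_add, eval_pow, eval_X, eval_C] at h'
      linear_combination h'
    have h1 : a₁ ^ (n + 1) = a₁ * a₂ := by rw [hroot a₁ (Or.inl rfl), hprod]
    have h2' : a₂ ^ (n + 1) = a₁ * a₂ := by rw [hroot a₂ (Or.inr rfl), hprod]
    have ha₁0 : a₁ ≠ 0 := by
      rintro h0
      rw [h0, zero_mul] at h2'
      have : a₂ = 0 := pow_eq_zero_iff (Nat.succ_ne_zero n) |>.mp h2'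
      rw [h0, this] at hne; exact hne rfl
    have ha₂0 : a₂ ≠ 0 := by
      rintro h0
      rw [h0, mul_zero] at h1
      have : a₁ = 0 := pow_eq_zero_iff (Nat.succ_ne_zero n) |>.mp h1
      rw [h0, this] at hne; exact hne rfl
    have hpow1 : a₁ ^ n = a₂ := by
      apply mul_right_cancel₀ ha₁0
      rw [← pow_succ, h1]; ring
    have hpow2 : a₂ ^ n = a₁ := by
      apply mul_right_cancel₀ ha₂0
      rw [← pow_succ, h2']
    have hvne : a₁.val ≠ a₂.val := fun h => hne (ZMod.val_injective p h)
    rcases lt_or_gt_of_ne hvne with hlt | hgt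
    · exact ⟨a₁, ha₁0, by rw [hpow1, hpow2], by rw [hpow1]; exact hlt,
        by rw [hpow1, add_comm]; exact hsum, by rw [hpow1, mul_comm, hprod]⟩
    · exact ⟨a₂, ha₂0, by rw [hpow2, hpow1], by rw [hpow2]; exact hgt,
        by rw [hpow2]; exact hsum, by rw [hpow2, hprod]⟩
  have step1 : S.ncard ≤ T1.ncard := by
    apply Set.ncard_le_ncard_of_injOn f
    · intro bc hbc
      have hex := key bc hbc
      have hspec := hex.choose_spec
      rw [hf]
      simp only [dif_pos hex]
      exact ⟨hspec.1, hspec.2.1, hspec.2.2.1⟩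
    · intro bc hbc bc' hbc' heq
      have hex := key bc hbc
      have hex' := key bc' hbc'
      have hspec := hex.choose_spec
      have hspec' := hex'.choose_spec
      rw [hf] at heq
      simp only [dif_pos hex, dif_pos hex'] at heq
      have e1 : bc.1 = bc'.1 := by
        rw [← hspec.2.2.2.1, ← hspec'.2.2.2.1, heq]
      have e2 : bc.2 = bc'.2 := by
        have h' : -bc.2 = -bc'.2 := by
          rw [← hspec.2.2.2.2, ← hspec'.2.2.2.2, heq]
        exact neg_injective h'
      exact Prod.ext_iff.mpr ⟨e1, e2⟩
  have hT2img : T2 = (fun a => a ^ n) '' T1 := by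
    ext b
    simp only [hT1, hT2, Set.mem_image, Set.mem_setOf_eq]
    constructor
    · rintro ⟨hb0, hbpow, hblt⟩
      refine ⟨b ^ n, ⟨?_, ?_, ?_⟩, hbpow⟩
      · intro h; rw [h, zero_pow hn.ne'] at hbpow; exact hb0 hbpow.symm
      · rw [hbpow]
      · rw [hbpow]; exact hblt
    · rintro ⟨a, ⟨ha0, hapow, halt⟩, rfl⟩
      refine ⟨?_, ?_, ?_⟩
      · intro h; rw [h, zero_pow hn.ne'] at hapow; exact ha0 hapow.symm
      · rw [hapow]
      · rw [hapow]; exact halt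
  have hinj : Set.InjOn (fun a => a ^ n) T1 := by
    rintro a ⟨_, ha, _⟩ b ⟨_, hb, _⟩ heq
    simp only at heq
    calc a = (a ^ n) ^ n := ha.symm
    _ = (b ^ n) ^ n := by rw [heq]
    _ = b := hb
  have hcard12 : T2.ncard = T1.ncard := by
    rw [hT2img, Set.ncard_image_of_injOn hinj]
  have hdisj : Disjoint T1 T2 := by
    rw [Set.disjoint_left]
    rintro a ⟨_, _, hlt⟩ ⟨_, _, hgt⟩
    exact absurd hlt (not_lt.mpr hgt.le)
  have hsub : T1 ∪ T2 ⊆ {(0 : ZMod p)}ᶜ := by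
    rintro a (⟨h, _, _⟩ | ⟨h, _, _⟩) <;> simpa using h
  have hcompl : ({(0 : ZMod p)}ᶜ : Set (ZMod p)).ncard = p - 1 := by
    have h' := Set.ncard_add_ncard_compl ({(0 : ZMod p)} : Set (ZMod p))
    rw [Set.ncard_singleton] at h'
    have hcard : Nat.card (ZMod p) = p := by
      simp [Nat.card_eq_fintype_card, ZMod.card]
    omega
  have hunion : (T1 ∪ T2).ncard = T1.ncard + T2.ncard :=
    Set.ncard_union_eq hdisj (Set.toFinite _) (Set.toFinite _)
  have hle : T1.ncard + T2.ncard ≤ p - 1 := by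
    rw [← hunion, ← hcompl]
    exact Set.ncard_le_ncard hsub (Set.toFinite _)
  rw [hcard12] at hle
  omega
end

section
/- Let p be an odd prime and let b, c be integers with ((b^2+4c)/p) = −1 and ((−c)/p) = 1. Then in the field F_p[x]/(x^2−bx−c), the element x satisfies x^{(p^2−1)/2} = 1. -/
/-!
The root `α` of `X² - bX - c` generates `𝔽_{p²}`, whose norm map to `𝔽_p` is `α ↦ α ^ (p + 1)`;
the norm of `α` is the constant term `-c` of its minimal polynomial. Hence
`α ^ ((p² - 1) / 2) = (-c) ^ ((p - 1) / 2)`, which is `1` by Euler's criterion.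
-/

open Polynomial

theorem irreducible_X_sq_sub_C_mul_X_sub_C {K : Type*} [Field K] {b c : K}
    (h : ¬IsSquare (b ^ 2 + 4 * c)) : Irreducible (X ^ 2 - C b * X - C c) := by
  have hdeg : (X ^ 2 - C b * X - C c).natDegree = 2 := by compute_degree!
  refine irreducible_of_degree_le_three_of_not_isRoot (by simp [hdeg]) fun x hx ↦
    h ⟨2 * x - b, ?_⟩
  simp only [IsRoot, eval_sub, eval_pow, eval_mul, eval_X, eval_C] at hx
  linear_combination -4 * hx

theorem AdjoinRoot.natCard_eq {K : Type*} [Field K] {f : K[X]} (hf : f ≠ 0) :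
    Nat.card (AdjoinRoot f) = Nat.card K ^ f.natDegree := by
  rw [Nat.card_congr (powerBasis hf).basis.equivFun.toEquiv, Nat.card_fun, Nat.card_fin,
    powerBasis_dim]

theorem AdjoinRoot.norm_root {K : Type*} [Field K] {f : K[X]} (hf : f.Monic) :
    Algebra.norm K (root f) = (-1) ^ f.natDegree * f.coeff 0 := by
  have := Algebra.PowerBasis.norm_gen_eq_coeff_zero_minpoly (powerBasis hf.ne_zero)
  rwa [minpoly_powerBasis_gen_of_monic hf, powerBasis_gen, powerBasis_dim] at this

theorem FiniteField.pow_card_sub_one_div_two_eq_one_of_quadraticChar_norm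
    {F L : Type*} [Field F] [Fintype F] [DecidableEq F] [Field L] [Algebra F L] [Finite L]
    (hF : ringChar F ≠ 2) {x : L} (hx : quadraticChar F (Algebra.norm F x) = 1) :
    x ^ ((Nat.card L - 1) / 2) = 1 := by
  have hpow : Algebra.norm F x ^ (Fintype.card F / 2) = 1 := by
    rw [← quadraticChar_eq_pow_of_char_ne_two' hF, hx, Int.cast_one]
  have : Fintype L := Fintype.ofFinite L
  obtain ⟨m, hm⟩ : Fintype.card F - 1 ∣ Nat.card L - 1 := by
    simpa [Nat.card_eq_fintype_card, Module.card_eq_pow_finrank (K := F) (V := L)] using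
      Nat.sub_dvd_pow_sub_pow (Fintype.card F) 1 (Module.finrank F L)
  have hexp : (Nat.card L - 1) / 2 =
      (Nat.card L - 1) / (Fintype.card F - 1) * (Fintype.card F / 2) := by
    have hodd := FiniteField.odd_card_of_char_ne_two hF
    have hpos : 0 < Fintype.card F - 1 := by have := Fintype.one_lt_card (α := F); omega
    rw [hm, Nat.mul_div_cancel_left _ hpos,
      show Fintype.card F - 1 = 2 * (Fintype.card F / 2) by omega, mul_assoc,
      Nat.mul_div_cancel_left _ two_pos, mul_comm]
  rw [hexp, pow_mul, ← Nat.card_eq_fintype_card, ← FiniteField.algebraMap_norm_eq_pow, ← map_pow,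
    Nat.card_eq_fintype_card, hpow, map_one]

theorem stmt_14 (p : ℕ) [Fact p.Prime] (hodd : Odd p) (b c : ZMod p)
    (h₁ : quadraticChar (ZMod p) (b ^ 2 + 4 * c) = -1)
    (h₂ : quadraticChar (ZMod p) (-c) = 1) :
    (AdjoinRoot.root (X ^ 2 - C b * X - C c : (ZMod p)[X])) ^ ((p ^ 2 - 1) / 2) = 1 := by
  set f : (ZMod p)[X] := X ^ 2 - C b * X - C c
  have hmonic : f.Monic := by unfold f; monicity!
  have hdeg : f.natDegree = 2 := by unfold f; compute_degree!
  have : Fact (Irreducible f) :=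
    ⟨irreducible_X_sq_sub_C_mul_X_sub_C (quadraticChar_neg_one_iff_not_isSquare.mp h₁)⟩
  have hcard : Nat.card (AdjoinRoot f) = p ^ 2 := by
    rw [AdjoinRoot.natCard_eq hmonic.ne_zero, Nat.card_zmod, hdeg]
  have : Finite (AdjoinRoot f) :=
    Nat.finite_of_card_ne_zero (hcard ▸ pow_ne_zero 2 (Fact.out : p.Prime).ne_zero)
  have hnorm : Algebra.norm (ZMod p) (AdjoinRoot.root f) = -c := by
    rw [AdjoinRoot.norm_root hmonic, hdeg]
    simp [f]
  have hchar : ringChar (ZMod p) ≠ 2 := by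
    rw [ZMod.ringChar_zmod_n]
    rintro rfl
    exact Nat.not_odd_iff_even.mpr even_two hodd
  rw [← hcard]
  exact FiniteField.pow_card_sub_one_div_two_eq_one_of_quadraticChar_norm hchar (hnorm ▸ h₂)
end

section
/- Let p be an odd prime with ((b^2+4c)/p) = −1 and ((−c)/p) = 1, and write p^2 − 1 = 2^r s with s odd. Then in F_p[x]/(x^2−bx−c), either x^s = 1 or x^{2^j s} = −1 for some 0 ≤ j ≤ r−2. -/
open Polynomial

lemma aux_two_pow {M : Type*} [Ring M] [NoZeroDivisors M] (x : M) (s : ℕ) :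
    ∀ n : ℕ, x ^ (2 ^ n * s) = 1 → x ^ s = 1 ∨ ∃ j < n, x ^ (2 ^ j * s) = -1 := by
  intro n
  induction n with
  | zero => intro h; left; simpa using h
  | succ n ih =>
    intro h
    have h2 : (x ^ (2 ^ n * s)) * (x ^ (2 ^ n * s)) = 1 := by
      rw [← pow_add]
      rw [show 2 ^ n * s + 2 ^ n * s = 2 ^ (n + 1) * s by ring]
      exact h
    rcases mul_self_eq_one_iff.mp h2 with h1 | hm1
    · rcases ih h1 with h | ⟨j, hj, hje⟩
      · exact Or.inl h
      · exact Or.inr ⟨j, Nat.lt_succ_of_lt hj, hje⟩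
    · exact Or.inr ⟨n, Nat.lt_succ_self n, hm1⟩

lemma mem_prime_field {p : ℕ} [Fact p.Prime] {K : Type*} [Field K] [Algebra (ZMod p) K]
    {x : K} (hx : x ^ p = x) : ∃ t : ZMod p, algebraMap (ZMod p) K t = x := by
  have hp1 : 1 < p := (Fact.out : p.Prime).one_lt
  classical
  set g : K[X] := X ^ p - X with hg
  have hg0 : g ≠ 0 := FiniteField.X_pow_card_sub_X_ne_zero K hp1
  have hdeg : g.natDegree = p := FiniteField.X_pow_card_sub_X_natDegree_eq K hp1
  have hinj : Function.Injective (algebraMap (ZMod p) K) :=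
    (algebraMap (ZMod p) K).injective
  have hsub : (Finset.univ.image (algebraMap (ZMod p) K)) ⊆ g.roots.toFinset := by
    intro y hy
    rcases Finset.mem_image.mp hy with ⟨t, _, rfl⟩
    rw [Multiset.mem_toFinset, mem_roots hg0]
    simp [hg, IsRoot, ← map_pow, ZMod.pow_card]
  have hc1 : (Finset.univ.image (algebraMap (ZMod p) K)).card = p := by
    rw [Finset.card_image_of_injective _ hinj, Finset.card_univ, ZMod.card]
  have hc2 : g.roots.toFinset.card ≤ p := by
    calc g.roots.toFinset.card ≤ Multiset.card g.roots := Multiset.toFinset_card_le _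
    _ ≤ g.natDegree := Polynomial.card_roots' g
    _ = p := hdeg
  have heq : Finset.univ.image (algebraMap (ZMod p) K) = g.roots.toFinset :=
    Finset.eq_of_subset_of_card_le hsub (by omega)
  have hxr : x ∈ g.roots.toFinset := by
    rw [Multiset.mem_toFinset, mem_roots hg0]
    simp [hg, IsRoot, hx]
  rw [← heq] at hxr
  rcases Finset.mem_image.mp hxr with ⟨t, _, ht⟩
  exact ⟨t, ht⟩

theorem stmt_15 (p : ℕ) [Fact p.Prime] (hodd : Odd p) (b c : ZMod p)
    (h₁ : quadraticChar (ZMod p) (b ^ 2 + 4 * c) = -1)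
    (h₂ : quadraticChar (ZMod p) (-c) = 1) (r s : ℕ) (hs : Odd s)
    (hrs : p ^ 2 - 1 = 2 ^ r * s) :
    (AdjoinRoot.root (X ^ 2 - C b * X - C c : (ZMod p)[X])) ^ s = 1 ∨
      ∃ j, j ≤ r - 2 ∧
        (AdjoinRoot.root (X ^ 2 - C b * X - C c : (ZMod p)[X])) ^ (2 ^ j * s) = -1 := by
  have hp : p.Prime := Fact.out
  set f : (ZMod p)[X] := X ^ 2 - C b * X - C c with hf
  have hnsq : ¬ IsSquare (b ^ 2 + 4 * c) := quadraticChar_neg_one_iff_not_isSquare.mp h₁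
  have hnoroot : ∀ t : ZMod p, t ^ 2 - b * t - c ≠ 0 := by
    intro t ht
    exact hnsq ⟨2 * t - b, by linear_combination (-4 : ZMod p) * ht⟩
  have hmonic : f.Monic := by unfold f; monicity!
  have hndeg : f.natDegree = 2 := by unfold f; compute_degree!
  have hirr : Irreducible f := by
    rw [hmonic.irreducible_iff_roots_eq_zero_of_degree_le_three (by omega) (by omega)]
    rw [Multiset.eq_zero_iff_forall_notMem]
    intro t ht
    rw [mem_roots hmonic.ne_zero] at ht
    apply hnoroot t
    simpa [hf, IsRoot] using ht
  haveI : Fact (Irreducible f) := ⟨hirr⟩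
  set K := AdjoinRoot f with hK
  set x : K := AdjoinRoot.root f with hx
  set A : ZMod p →+* K := algebraMap (ZMod p) K with hA
  have hrel : x ^ 2 = A b * x + A c := by
    have h0 := AdjoinRoot.eval₂_root f
    simp only [hf, eval₂_sub, eval₂_pow, eval₂_mul, eval₂_X, eval₂_C] at h0
    have hAof : (AdjoinRoot.of f : ZMod p →+* K) = A := rfl
    rw [hAof] at h0
    linear_combination h0
  haveI : CharP K p := charP_of_injective_algebraMap (A.injective) p
  have hfrob : (x ^ p) ^ 2 = A b * x ^ p + A c := by
    have h1 : (x ^ p) ^ 2 = (x ^ 2) ^ p := by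
      rw [← pow_mul, ← pow_mul, Nat.mul_comm]
    rw [h1, hrel, add_pow_char, mul_pow, ← map_pow, ← map_pow, ZMod.pow_card, ZMod.pow_card]
  have hfactor : (x ^ p - x) * (x ^ p - (A b - x)) = 0 := by
    linear_combination hfrob - hrel
  have hxp : x ^ p = A b - x := by
    rcases mul_eq_zero.mp hfactor with h | h
    · exfalso
      have hx' : x ^ p = x := by linear_combination h
      obtain ⟨t, ht⟩ := mem_prime_field hx'
      apply hnoroot t
      apply A.injective
      rw [map_sub, map_sub, map_pow, map_mul, ht, map_zero]
      linear_combination hrel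
    · linear_combination h
  have hnorm : x ^ (p + 1) = - A c := by
    rw [pow_succ, hxp]
    linear_combination - hrel
  -- arithmetic
  obtain ⟨k, hpk⟩ := hodd
  have hk1 : 1 ≤ k := by
    rcases Nat.lt_or_ge k 1 with h | h
    · interval_cases k
      · exfalso; rw [hpk] at hp; norm_num at hp
    · exact h
  have hcard : p ^ 2 - 1 = 2 * (k * (p + 1)) :=
    Nat.sub_eq_of_eq_add (by rw [hpk]; ring)
  have hr1 : 1 ≤ r := by
    by_contra hr
    have hr0 : r = 0 := by omega
    rw [hr0, pow_zero, one_mul] at hrs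
    have : s = 2 * (k * (p + 1)) := by omega
    rcases hs with ⟨m, hm⟩
    omega
  have hmain : 2 ^ (r - 1) * s = k * (p + 1) := by
    have h2 : 2 * (2 ^ (r - 1) * s) = 2 * (k * (p + 1)) := by
      rw [← hcard, hrs, ← mul_assoc, ← pow_succ']
      congr 2
      omega
    exact Nat.eq_of_mul_eq_mul_left (by norm_num) h2
  -- -c is a nonzero square
  have hc0 : (-c : ZMod p) ≠ 0 := by
    intro h
    rw [h, quadraticChar_zero] at h₂
    norm_num at h₂
  obtain ⟨d, hd⟩ : IsSquare (-c : ZMod p) := (quadraticChar_one_iff_isSquare hc0).mp h₂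
  have hd0 : d ≠ 0 := by
    intro h
    rw [h, mul_zero] at hd
    exact hc0 hd
  have hpow : x ^ (2 ^ (r - 1) * s) = 1 := by
    rw [hmain, mul_comm, pow_mul, hnorm]
    have : - A c = A (-c) := by rw [map_neg]
    rw [this, hd, ← map_pow]
    have : (d * d) ^ k = d ^ (p - 1) := by
      rw [← sq, ← pow_mul]
      congr 1
      omega
    rw [this, ZMod.pow_card_sub_one_eq_one hd0, map_one]
  rcases aux_two_pow x s (r - 1) hpow with h | ⟨j, hj, hje⟩
  · exact Or.inl h
  · exact Or.inr ⟨j, by omega, hje⟩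
end
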